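/- arXiv:math/0509092 — 3 statements merged into one kernel-verified Lean document; each statement's English description precedes it below -/
import Mathlib

section
/- Let p be a prime, k a finite field of characteristic p, W = W(k) the ring of p-typical Witt vectors with coefficients in k, and g ≥ 1 an integer. Suppose x, y : ℕ → ((ℤ/2ℤ)^g → W) satisfy, for all n ∈ ℕ and all u ∈ (ℤ/2ℤ)^g: y(n,u)² = x(n,u); y(n,u) − 1 ∈ 2p·W; 2^g · x(n+1,u) = Σ_{v ∈ (ℤ/2ℤ)^g} y(n,u+v)·y(n,v); and in addition x(0,u) − 1 ∈ 2^{g+2}·p·W for all u. Then the sequence converges coordinatewise to a common limit: there exists L ∈ W such that for every m ∈ ℕ there is N ∈ ℕ with x(n,u) − L ∈ p^m·W for all n ≥ N and all u ∈ (ℤ/2ℤ)^g. (Convergence of Mestre's generalized p-adic AGM sequence, with lim_n x^{(n)}_u = lim_n x^{(n)}_0 for all u.) -/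
namespace AGMAux

variable {p : ℕ} [hp : Fact p.Prime] {k : Type*} [Field k] [CharP k p]

lemma mul_pow_p_coeff (m : ℕ) (d : WittVector p k) :
    ∀ i < m, (d * (p : WittVector p k) ^ m).coeff i = 0 := by
  induction m generalizing d with
  | zero => intro i hi; omega
  | succ m IH =>
    intro i hi
    have h : d * (p : WittVector p k) ^ (m + 1) = (d * (p : WittVector p k) ^ m) * p := by ring
    rw [h]
    cases i with
    | zero => exact WittVector.mul_charP_coeff_zero _
    | succ j =>
      rw [WittVector.mul_charP_coeff_succ, IH d j (by omega), zero_pow hp.out.ne_zero]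

lemma coeff_zero_dvd [PerfectRing k p] (m : ℕ) (c : WittVector p k)
    (hc : ∀ i < m, c.coeff i = 0) : (p : WittVector p k) ^ m ∣ c := by
  induction m generalizing c with
  | zero => simpa using one_dvd c
  | succ m IH =>
    have h1 : c = WittVector.verschiebung (c.shift 1) := by
      have := WittVector.eq_iterate_verschiebung (x := c) (n := 1)
        (fun i hi => hc i (by omega))
      simpa using this
    obtain ⟨e, he⟩ := (WittVector.frobenius_bijective p k).surjective (c.shift 1)
    have hce : c = e * p := by
      rw [h1, ← he, WittVector.verschiebung_frobenius]
    have hek : ∀ i < m, e.coeff i = 0 := by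
      intro i hi
      have h2 : e.coeff i ^ p = (c.shift 1).coeff i := by
        rw [← he, WittVector.coeff_frobenius_charP]
      rw [WittVector.shift_coeff] at h2
      have h3 : c.coeff (1 + i) = 0 := hc _ (by omega)
      rw [h3] at h2
      exact pow_eq_zero_iff hp.out.ne_zero |>.mp h2
    obtain ⟨d, hd⟩ := IH e hek
    exact ⟨d, by rw [hce, hd]; ring⟩

lemma dvd_sub_iff [PerfectRing k p] (m : ℕ) (a b : WittVector p k) :
    (p : WittVector p k) ^ m ∣ a - b ↔ ∀ i < m, a.coeff i = b.coeff i := by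
  constructor
  · rintro ⟨d, hd⟩ i hi
    have h0 : ∀ j < m, (a - b).coeff j = 0 := by
      intro j hj
      rw [hd, mul_comm]
      exact mul_pow_p_coeff m d j hj
    have h1 : a - b ∈ RingHom.ker (WittVector.truncate (p := p) m) :=
      (WittVector.mem_ker_truncate _ _).mpr h0
    rw [RingHom.mem_ker, map_sub, sub_eq_zero] at h1
    have h2 := congrArg (fun z => TruncatedWittVector.coeff ⟨i, hi⟩ z) h1
    simpa only [WittVector.coeff_truncate] using h2
  · intro h
    apply coeff_zero_dvd
    intro i hi
    have h1 : WittVector.truncate (p := p) m a = WittVector.truncate (p := p) m b := by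
      apply TruncatedWittVector.ext
      intro j
      rw [WittVector.coeff_truncate, WittVector.coeff_truncate]
      exact h j j.2
    have h2 : a - b ∈ RingHom.ker (WittVector.truncate (p := p) m) := by
      rw [RingHom.mem_ker, map_sub, h1, sub_self]
    exact (WittVector.mem_ker_truncate _ _).mp h2 i hi

end AGMAux

/-- Convergence of Mestre's generalized `p`-adic AGM sequence: under the initial
condition `x(0,u) ∈ 1 + 2^{g+2} p W`, the sequence converges coordinatewise to a common
limit `L`, i.e. `lim_n x^{(n)}_u = lim_n x^{(n)}_0` for all `u`. -/
theorem agm_convergence (p : ℕ) [Fact p.Prime] (k : Type*) [Field k] [Fintype k] [CharP k p]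
    (g : ℕ) (hg : 1 ≤ g)
    (x y : ℕ → (Fin g → ZMod 2) → WittVector p k)
    (hsq : ∀ n u, (y n u) ^ 2 = x n u)
    (hy : ∀ n u, (2 * (p : WittVector p k)) ∣ (y n u - 1))
    (hrec : ∀ n u, 2 ^ g * x (n + 1) u = ∑ v : Fin g → ZMod 2, y n (u + v) * y n v)
    (hx0 : ∀ u, (2 ^ (g + 2) * (p : WittVector p k)) ∣ (x 0 u - 1)) :
    ∃ L : WittVector p k, ∀ m : ℕ, ∃ N : ℕ, ∀ n ≥ N, ∀ u : Fin g → ZMod 2,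
      ((p : WittVector p k) ^ m) ∣ (x n u - L) := by
  haveI : ExpChar k p := .prime Fact.out
  haveI : PerfectRing k p := inferInstance
  -- 2 is nonzero in the Witt vectors
  have two_ne : (2 : WittVector p k) ≠ 0 := by
    intro h2
    have hk : (2 : k) = 0 := by
      have h := congrArg (WittVector.constantCoeff) h2
      rw [map_ofNat, map_zero] at h
      exact h
    have hpd : (p : ℕ) ∣ 2 := (CharP.cast_eq_zero_iff k p 2).mp (by exact_mod_cast hk)
    have hp2 : p = 2 := (Nat.prime_dvd_prime_iff_eq Fact.out Nat.prime_two).mp hpd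
    apply WittVector.p_nonzero p k
    subst hp2
    exact_mod_cast h2
  -- elements of the form 1 + p c are units
  have hunit : ∀ c : WittVector p k, IsUnit (1 + (p : WittVector p k) * c) := by
    intro c
    apply WittVector.isUnit_of_coeff_zero_ne_zero
    have h1 : ((p : WittVector p k) * c).coeff 0 = 0 := by
      rw [mul_comm]; exact WittVector.mul_charP_coeff_zero c
    have h2 : ((1 : WittVector p k) + (p : WittVector p k) * c).coeff 0
        = (1 : WittVector p k).coeff 0 + ((p : WittVector p k) * c).coeff 0 := by
      simp [WittVector.add_coeff_zero]
    rw [h2, h1, WittVector.one_coeff_zero, add_zero]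
    exact one_ne_zero
  -- from x-differences to y-differences
  have hyd : ∀ n (a b : Fin g → ZMod 2) (m : ℕ),
      ((2 : WittVector p k) ^ (g + 2) * (p : WittVector p k) ^ m ∣ x n a - x n b) →
      ((2 : WittVector p k) ^ (g + 1) * (p : WittVector p k) ^ m ∣ y n a - y n b) := by
    intro n a b m hdvd
    obtain ⟨e, he⟩ := hdvd
    obtain ⟨ca, hca⟩ := hy n a
    obtain ⟨cb, hcb⟩ := hy n b
    have hsum : y n a + y n b = 2 * (1 + (p : WittVector p k) * (ca + cb)) := by
      linear_combination hca + hcb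
    have hdiff : (y n a - y n b) * (y n a + y n b) = x n a - x n b := by
      linear_combination hsq n a - hsq n b
    have key : (2 : WittVector p k) * ((y n a - y n b) * (1 + (p : WittVector p k) * (ca + cb)))
        = (2 : WittVector p k)
          * ((2 : WittVector p k) ^ (g + 1) * (p : WittVector p k) ^ m * e) := by
      calc (2 : WittVector p k) * ((y n a - y n b) * (1 + (p : WittVector p k) * (ca + cb)))
          = (y n a - y n b) * (y n a + y n b) := by rw [hsum]; ring
        _ = x n a - x n b := hdiff
        _ = 2 ^ (g + 2) * (p : WittVector p k) ^ m * e := he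
        _ = (2 : WittVector p k) * (2 ^ (g + 1) * (p : WittVector p k) ^ m * e) := by ring
    have key2 := mul_left_cancel₀ two_ne key
    obtain ⟨u, hu⟩ := hunit (ca + cb)
    rw [← hu] at key2
    have hzz : (2 : WittVector p k) ^ (g + 1) * (p : WittVector p k) ^ m ∣ (y n a - y n b) * u :=
      ⟨e, key2⟩
    exact (Units.dvd_mul_right).mp hzz
  -- main contraction estimate
  have hd : ∀ n (a b : Fin g → ZMod 2),
      (2 : WittVector p k) ^ (g + 2) * (p : WittVector p k) ^ (n + 1) ∣ x n a - x n b := by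
    intro n
    induction n with
    | zero =>
      intro a b
      rw [pow_one]
      have h1 : x 0 a - x 0 b = (x 0 a - 1) - (x 0 b - 1) := by ring
      rw [h1]
      exact dvd_sub (hx0 a) (hx0 b)
    | succ n IH =>
      have hone : ∀ z : ZMod 2, z ≠ 0 → z = 1 := by decide
      have hG2 : ∀ v : Fin g → ZMod 2, v + v = 0 := by
        intro v; funext j
        have hz : ∀ z : ZMod 2, z + z = 0 := by decide
        simpa using hz (v j)
      intro a b
      by_cases hab : a = b
      · simp [hab]
      set t := a + b with ht
      have htne : t ≠ 0 := by
        intro h0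
        apply hab
        have h1 := congrArg (· + b) h0
        simp only [zero_add] at h1
        rw [add_assoc, hG2 b, add_zero] at h1
        exact h1
      have hex : ¬ (∀ j, t j = 0) := fun h => htne (funext h)
      push_neg at hex
      obtain ⟨i, hti⟩ := hex
      have hti1 : t i = 1 := hone _ hti
      have hat : a + t = b := by rw [ht, ← add_assoc, hG2 a, zero_add]
      have hbt : b + t = a := by rw [ht, add_comm a b, ← add_assoc, hG2 b, zero_add]
      have htt : ∀ w : Fin g → ZMod 2, t + (t + w) = w := by
        intro w; rw [← add_assoc, hG2 t, zero_add]
      set f : (Fin g → ZMod 2) → WittVector p k :=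
        fun w => (y n (a + w) - y n (b + w)) * (y n w - y n (t + w)) with hf
      set d : WittVector p k := x (n + 1) a - x (n + 1) b with hdd
      have h2 : (2 : WittVector p k) ^ g * x (n + 1) b
          = ∑ w : Fin g → ZMod 2, y n (t + w) * y n (a + w) := by
        rw [hrec n b, ← Equiv.sum_comp (Equiv.addLeft a) (fun v => y n (b + v) * y n v)]
        apply Finset.sum_congr rfl
        intro w _
        simp only [Equiv.coe_addLeft]
        have hba : b + (a + w) = t + w := by rw [ht]; abel
        rw [hba]
      have h3 : (2 : WittVector p k) ^ g * d
          = ∑ w : Fin g → ZMod 2, y n (a + w) * (y n w - y n (t + w)) := by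
        rw [hdd, mul_sub, hrec n a, h2, ← Finset.sum_sub_distrib]
        apply Finset.sum_congr rfl
        intro w _
        ring
      have h4 : (∑ w : Fin g → ZMod 2, y n (a + w) * (y n w - y n (t + w)))
          = ∑ w : Fin g → ZMod 2, y n (b + w) * (y n (t + w) - y n w) := by
        rw [← Equiv.sum_comp (Equiv.addLeft t) (fun v => y n (a + v) * (y n v - y n (t + v)))]
        apply Finset.sum_congr rfl
        intro w _
        simp only [Equiv.coe_addLeft]
        have e1 : a + (t + w) = b + w := by rw [← add_assoc, hat]
        rw [e1, htt w]
      have h34 : (2 : WittVector p k) ^ g * d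
          = ∑ w : Fin g → ZMod 2, y n (b + w) * (y n (t + w) - y n w) := h3.trans h4
      have h5 : (2 : WittVector p k) * ((2 : WittVector p k) ^ g * d)
          = ∑ w : Fin g → ZMod 2, f w := by
        calc (2 : WittVector p k) * ((2 : WittVector p k) ^ g * d)
            = ((2 : WittVector p k) ^ g * d) + ((2 : WittVector p k) ^ g * d) := by ring
          _ = (∑ w : Fin g → ZMod 2, y n (a + w) * (y n w - y n (t + w)))
              + ∑ w : Fin g → ZMod 2, y n (b + w) * (y n (t + w) - y n w) :=
            congrArg₂ (· + ·) h3 h34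
          _ = ∑ w : Fin g → ZMod 2,
                (y n (a + w) * (y n w - y n (t + w)) + y n (b + w) * (y n (t + w) - y n w)) :=
            Finset.sum_add_distrib.symm
          _ = ∑ w : Fin g → ZMod 2, f w := by
              apply Finset.sum_congr rfl
              intro w _
              rw [hf]
              ring
      have hfinv : ∀ w : Fin g → ZMod 2, f (t + w) = f w := by
        intro w
        simp only [hf]
        have e1 : a + (t + w) = b + w := by rw [← add_assoc, hat]
        have e2 : b + (t + w) = a + w := by rw [← add_assoc, hbt]
        rw [e1, e2, htt w]
        ring
      have h6 : (∑ w : Fin g → ZMod 2, f w)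
          = 2 * ∑ w ∈ Finset.univ.filter (fun w => w i = 0), f w := by
        have hsplit := Finset.sum_filter_add_sum_filter_not Finset.univ (fun w => w i = 0) f
        have hbij : (∑ w ∈ Finset.univ.filter (fun w => ¬ w i = 0), f w)
            = ∑ w ∈ Finset.univ.filter (fun w => w i = 0), f w := by
          apply Finset.sum_nbij' (i := fun w => t + w) (j := fun w => t + w)
          · intro w hw
            simp only [Finset.mem_filter, Finset.mem_univ, true_and] at hw ⊢
            have hw1 : w i = 1 := hone _ hw
            have h20 : (1 : ZMod 2) + 1 = 0 := by decide
            simp [Pi.add_apply, hti1, hw1, h20]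
          · intro w hw
            simp only [Finset.mem_filter, Finset.mem_univ, true_and] at hw ⊢
            simp [Pi.add_apply, hti1, hw]
          · intro w _; exact htt w
          · intro w _; exact htt w
          · intro w _; exact (hfinv w).symm
        rw [← hsplit, hbij, two_mul]
      have hterm : ∀ w ∈ Finset.univ.filter (fun w : Fin g → ZMod 2 => w i = 0),
          ((2 : WittVector p k) ^ (g + 1) * (p : WittVector p k) ^ (n + 1))
            * ((2 : WittVector p k) ^ (g + 1) * (p : WittVector p k) ^ (n + 1)) ∣ f w := by
        intro w _
        exact mul_dvd_mul (hyd n (a + w) (b + w) (n + 1) (IH _ _))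
          (hyd n w (t + w) (n + 1) (IH _ _))
      obtain ⟨E, hE⟩ := Finset.dvd_sum hterm
      have hcancel : (2 : WittVector p k) ^ g * d
          = (2 : WittVector p k) ^ g * ((2 : WittVector p k) ^ (g + 2)
              * ((p : WittVector p k) ^ (n + 1) * (p : WittVector p k) ^ (n + 1) * E)) := by
        apply mul_left_cancel₀ two_ne
        rw [h5, h6, hE]
        have hexp : ((2 : WittVector p k) ^ (g + 1) * (2 : WittVector p k) ^ (g + 1))
            = (2 : WittVector p k) ^ g * (2 : WittVector p k) ^ (g + 2) := by
          rw [← pow_add, ← pow_add]; congr 1; omega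
        calc (2 : WittVector p k)
              * (((2 : WittVector p k) ^ (g + 1) * (p : WittVector p k) ^ (n + 1))
                * ((2 : WittVector p k) ^ (g + 1) * (p : WittVector p k) ^ (n + 1)) * E)
            = ((2 : WittVector p k) ^ (g + 1) * (2 : WittVector p k) ^ (g + 1))
                * ((p : WittVector p k) ^ (n + 1) * (p : WittVector p k) ^ (n + 1) * E) * 2 := by
              ring
          _ = (2 : WittVector p k) * ((2 : WittVector p k) ^ g * ((2 : WittVector p k) ^ (g + 2)
                * ((p : WittVector p k) ^ (n + 1) * (p : WittVector p k) ^ (n + 1) * E))) := by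
              rw [hexp]; ring
      have hdq := mul_left_cancel₀ (pow_ne_zero g two_ne) hcancel
      rw [hdq]
      apply mul_dvd_mul_left
      have hq2 : (p : WittVector p k) ^ (n + 2)
          ∣ (p : WittVector p k) ^ (n + 1) * (p : WittVector p k) ^ (n + 1) := by
        rw [← pow_add]
        exact pow_dvd_pow _ (by omega)
      exact hq2.mul_right E
  -- the sequence at 0 is Cauchy
  have hcn : ∀ n, (p : WittVector p k) ^ (n + 1) ∣ x (n + 1) 0 - x n 0 := by
    intro n
    have hcard : Fintype.card (Fin g → ZMod 2) = 2 ^ g := by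
      simp [Fintype.card_fun]
    have hsum1 : (2 : WittVector p k) ^ g * x (n + 1) 0
        = ∑ v : Fin g → ZMod 2, x n v := by
      rw [hrec n 0]
      apply Finset.sum_congr rfl
      intro v _
      rw [zero_add, ← hsq n v, pow_two]
    have hsum2 : (2 : WittVector p k) ^ g * x n 0 = ∑ _v : Fin g → ZMod 2, x n 0 := by
      rw [Finset.sum_const, Finset.card_univ, hcard, nsmul_eq_mul, Nat.cast_pow, Nat.cast_ofNat]
    have h3 : (2 : WittVector p k) ^ g * (x (n + 1) 0 - x n 0)
        = ∑ v : Fin g → ZMod 2, (x n v - x n 0) := by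
      rw [mul_sub, hsum1, hsum2, ← Finset.sum_sub_distrib]
    have hterm : ∀ v ∈ (Finset.univ : Finset (Fin g → ZMod 2)),
        (2 : WittVector p k) ^ (g + 2) * (p : WittVector p k) ^ (n + 1) ∣ x n v - x n 0 :=
      fun v _ => hd n v 0
    obtain ⟨E, hE⟩ := Finset.dvd_sum hterm
    have hcancel : (2 : WittVector p k) ^ g * (x (n + 1) 0 - x n 0)
        = (2 : WittVector p k) ^ g * ((p : WittVector p k) ^ (n + 1) * (2 ^ 2 * E)) := by
      rw [h3, hE]
      ring
    have := mul_left_cancel₀ (pow_ne_zero g two_ne) hcancel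
    exact ⟨2 ^ 2 * E, this⟩
  have hcau : ∀ m n, m ≤ n → (p : WittVector p k) ^ m ∣ x n 0 - x m 0 := by
    intro m n h
    induction n, h using Nat.le_induction with
    | base => simp
    | succ n hmn IH2 =>
      have h1 : (p : WittVector p k) ^ m ∣ x (n + 1) 0 - x n 0 :=
        dvd_trans (pow_dvd_pow _ (by omega)) (hcn n)
      have h2 := dvd_add h1 IH2
      have h3 : (x (n + 1) 0 - x n 0) + (x n 0 - x m 0) = x (n + 1) 0 - x m 0 := by ring
      rwa [h3] at h2
  -- the limit
  refine ⟨WittVector.mk p (fun i => (x (i + 1) 0).coeff i), fun m => ⟨m, fun n hn u => ?_⟩⟩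
  set L : WittVector p k := WittVector.mk p (fun i => (x (i + 1) 0).coeff i) with hL
  have hLc : ∀ i : ℕ, L.coeff i = (x (i + 1) 0).coeff i := by
    intro i; rw [hL]; exact congrFun (WittVector.coeff_mk p _) i
  have h2 : (p : WittVector p k) ^ m ∣ x n 0 - L := by
    rw [AGMAux.dvd_sub_iff]
    intro i hi
    have h1 : (p : WittVector p k) ^ (i + 1) ∣ x n 0 - x (i + 1) 0 :=
      hcau (i + 1) n (by omega)
    have h2 := (AGMAux.dvd_sub_iff (i + 1) (x n 0) (x (i + 1) 0)).mp h1 i (by omega)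
    rw [h2, hLc i]
  have h1 : (p : WittVector p k) ^ m ∣ x n u - x n 0 := by
    refine dvd_trans (pow_dvd_pow _ (show m ≤ n + 1 by omega)) (dvd_trans ?_ (hd n u 0))
    exact Dvd.intro_left _ rfl
  have h3 := dvd_add h1 h2
  have h4 : (x n u - x n 0) + (x n 0 - L) = x n u - L := by ring
  rwa [h4] at h3
end

section
/- Let p be a prime and let R be a noetherian local ring that is complete with respect to its maximal ideal and whose residue field is perfect of characteristic p. If a : ℕ → R satisfies a(0) = 1 and a(n+1)^p = a(n) for all n ∈ ℕ (so each a(n) is a p^n-th root of unity and the system is p-power compatible), then a(n) = 1 for all n ∈ ℕ. (Concrete form of the vanishing Hom((ℚ_p/ℤ_p)_R, μ_{p^∞,R})(R) = 0: every compatible system of p-power roots of unity in R is trivial.) -/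
/-- In a complete noetherian local ring with perfect residue field of characteristic `p`,
every compatible system of `p`-power roots of unity is trivial; in other words
`Hom((ℚ_p/ℤ_p)_R, μ_{p^∞,R})(R) = 0`. -/
theorem compatible_p_power_roots_of_unity_trivial
    (p : ℕ) [Fact p.Prime] (R : Type*) [CommRing R] [IsNoetherianRing R] [IsLocalRing R]
    [IsAdicComplete (IsLocalRing.maximalIdeal R) R]
    [CharP (IsLocalRing.ResidueField R) p] [PerfectRing (IsLocalRing.ResidueField R) p]
    (a : ℕ → R) (h0 : a 0 = 1) (hcomp : ∀ n : ℕ, (a (n + 1)) ^ p = a n) :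
    ∀ n : ℕ, a n = 1 := by
  have hp : p.Prime := Fact.out
  set m := IsLocalRing.maximalIdeal R with hm
  -- each `a n` is a `p^n`-th root of unity
  have hroot : ∀ n : ℕ, a n ^ p ^ n = 1 := by
    intro n
    induction n with
    | zero => simpa using h0
    | succ n ih =>
      have : a (n + 1) ^ p ^ (n + 1) = (a (n + 1) ^ p) ^ p ^ n := by
        rw [← pow_mul, pow_succ']
      rw [this, hcomp n, ih]
  -- `p ∈ m`
  have hpm : (p : R) ∈ m := by
    rw [← IsLocalRing.residue_eq_zero_iff]
    rw [map_natCast]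
    exact CharP.cast_eq_zero (IsLocalRing.ResidueField R) p
  -- `a n - 1 ∈ m` for all n, via the residue field
  have hmem1 : ∀ n : ℕ, a n - 1 ∈ m := by
    intro n
    rw [← IsLocalRing.residue_eq_zero_iff]
    set x := IsLocalRing.residue R (a n) with hx
    have hxpow : x ^ p ^ n = 1 := by
      rw [hx, ← map_pow, hroot n, map_one]
    have : (x - 1) ^ p ^ n = 0 := by
      rw [sub_pow_char_pow x 1 n, hxpow, one_pow, sub_self]
    have hx1 : x - 1 = 0 := pow_eq_zero_iff (pow_ne_zero n hp.ne_zero) |>.mp this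
    rw [map_sub, map_one]
    exact hx1
  -- by induction, `a n - 1 ∈ m^(k+1)` for all k
  have hmemk : ∀ k n : ℕ, a n - 1 ∈ m ^ (k + 1) := by
    intro k
    induction k with
    | zero => intro n; simpa using hmem1 n
    | succ k ih =>
      intro n
      have ht : a (n + 1) - 1 ∈ m ^ (k + 1) := ih (n + 1)
      set t := a (n + 1) - 1 with htdef
      have hexp : a n - 1 = ∑ i ∈ Finset.range p, t ^ (i + 1) * (p.choose (i + 1) : R) := by
        have h1 : a n = (t + 1) ^ p := by
          rw [htdef, sub_add_cancel, hcomp n]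
        rw [h1, add_pow]
        have h2 : ∀ i ∈ Finset.range (p + 1),
            t ^ i * (1 : R) ^ (p - i) * (p.choose i : R) = t ^ i * (p.choose i : R) := by
          intro i _; rw [one_pow, mul_one]
        rw [Finset.sum_congr rfl h2, Finset.sum_range_succ' (fun i => t ^ i * (p.choose i : R)) p]
        simp
      rw [hexp]
      apply Ideal.sum_mem
      intro i _
      rcases Nat.eq_zero_or_pos i with hi | hi
      · subst hi
        simp only [zero_add, pow_one, Nat.choose_one_right]
        have : t * (p : R) ∈ m ^ (k + 1) * m := Ideal.mul_mem_mul ht hpm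
        have hle : m ^ (k + 1) * m ≤ m ^ (k + 2) := by
          rw [← pow_succ]
        exact hle this
      · have hsq : t ^ 2 ∈ m ^ ((k + 1) * 2) := by
          have := Ideal.pow_mem_pow ht 2
          rwa [← pow_mul] at this
        have heq : t ^ (i + 1) = t ^ 2 * t ^ (i - 1) := by
          rw [← pow_add]; congr 1; omega
        have h2 : t ^ (i + 1) ∈ m ^ ((k + 1) * 2) := by
          rw [heq]; exact Ideal.mul_mem_right _ _ hsq
        have hle : m ^ ((k + 1) * 2) ≤ m ^ (k + 2) := Ideal.pow_le_pow_right (by omega)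
        exact Ideal.mul_mem_right _ _ (hle h2)
  -- conclude by Hausdorff-ness of the adic topology
  intro n
  have haus : IsHausdorff m R := inferInstance
  have : a n - 1 = 0 := by
    apply haus.haus
    intro k
    rw [SModEq.zero]
    have : a n - 1 ∈ m ^ k := by
      rcases Nat.eq_zero_or_pos k with hk | hk
      · subst hk; simp
      · have := hmemk (k - 1) n
        have hk1 : k - 1 + 1 = k := by omega
        rwa [hk1] at this
    simpa [smul_eq_mul, Ideal.mul_top] using this
  exact sub_eq_zero.mp this
end

section
/- Let g ≥ 1 and let R be a commutative ring in which 2 is not a zero divisor. For u, v ∈ (ℤ/2ℤ)^g write l_u(v) = ∏_{i=1}^g (−1)^{u_i v_i} ∈ {1,−1}, computed via representatives u_i, v_i ∈ {0,1}. Suppose a, b : (ℤ/2ℤ)^g → R satisfy, for all u ∈ (ℤ/2ℤ)^g, the theta relation a(u)² = Σ_{v ∈ (ℤ/2ℤ)^g} b(u+v)·b(v). Define y(u) = Σ_{v} l_u(v)·a(v) and z(u) = Σ_{v} l_u(v)·b(v). Then for all u ∈ (ℤ/2ℤ)^g: 2^g · z(u)² = Σ_{v ∈ (ℤ/2ℤ)^g}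 y(u+v)·y(v). (Thus the Hadamard-type transform x(u) = y(u)², x'(u) = z(u)² carries the theta relation into the AGM relation x'(u) = 2^{-g} Σ_v √(x(u+v) x(v)).) -/
/-!
Write `ŝf(u) = ∑_v l_u(v) f(v)` for the Walsh–Hadamard transform. Because `l_u` is a character,
`ŝf(u)²` is the transform of the autocorrelation `w ↦ ∑_t f(w + t) f(t)`; because of the
orthogonality `∑_v l_v(w) = 2^g [w = 0]`, the autocorrelation of `ŝf` is `2^g` times the
transform of `f²`. The theta relation says that `a²` is the autocorrelation of `b`, so both sides
of the AGM relation equal `2^g ŝ(a²)(u)`.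
-/

open Finset

section WalshHadamard

variable {R : Type*} [CommRing R] {ι : Type*} [Fintype ι]

def signPairing (u v : ι → ZMod 2) : R := ∏ i, (-1 : R) ^ ((u i).val * (v i).val)

lemma neg_one_pow_val_add (x y : ZMod 2) :
    (-1 : R) ^ (x + y).val = (-1) ^ x.val * (-1) ^ y.val := by
  rw [ZMod.val_add, ← pow_add, neg_one_pow_eq_pow_mod_two (x.val + y.val)]

lemma signPairing_comm (u v : ι → ZMod 2) : (signPairing u v : R) = signPairing v u := by
  simp only [signPairing, Nat.mul_comm]

lemma signPairing_add_left (u v w : ι → ZMod 2) :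
    (signPairing (u + v) w : R) = signPairing u w * signPairing v w := by
  simp only [signPairing, ← prod_mul_distrib, Pi.add_apply, pow_mul, neg_one_pow_val_add, mul_pow]

lemma signPairing_add_right (u v w : ι → ZMod 2) :
    (signPairing u (v + w) : R) = signPairing u v * signPairing u w := by
  rw [signPairing_comm, signPairing_add_left, signPairing_comm v, signPairing_comm w]

lemma signPairing_mul_self (u v : ι → ZMod 2) : (signPairing u v : R) * signPairing u v = 1 := by
  simp only [signPairing, ← prod_mul_distrib, ← mul_pow, neg_one_mul, neg_neg, one_pow,
    prod_const_one]

lemma signPairing_zero_left (v : ι → ZMod 2) : (signPairing 0 v : R) = 1 := by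
  simp [signPairing]

variable [DecidableEq ι]

def walshHadamard (f : (ι → ZMod 2) → R) (u : ι → ZMod 2) : R := ∑ v, signPairing u v * f v

def autocorrelation (f : (ι → ZMod 2) → R) (u : ι → ZMod 2) : R := ∑ v, f (u + v) * f v

lemma walshHadamard_sq (f : (ι → ZMod 2) → R) (u : ι → ZMod 2) :
    walshHadamard f u ^ 2 = walshHadamard (autocorrelation f) u := by
  have shift (t : ι → ZMod 2) : (∑ s, signPairing u s * f s) * (signPairing u t * f t) =
      ∑ w, signPairing u w * (f (w + t) * f t) := by
    rw [sum_mul, ← Equiv.sum_comp (Equiv.addRight t)]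
    refine sum_congr rfl fun w _ => ?_
    rw [Equiv.coe_addRight, signPairing_add_right]
    linear_combination (signPairing u w * f (w + t) * f t) * signPairing_mul_self (R := R) u t
  calc walshHadamard f u ^ 2 = ∑ t, (∑ s, signPairing u s * f s) * (signPairing u t * f t) := by
        rw [sq, walshHadamard, mul_sum]
    _ = ∑ t, ∑ w, signPairing u w * (f (w + t) * f t) := sum_congr rfl fun t _ => shift t
    _ = walshHadamard (autocorrelation f) u := by
        rw [sum_comm]
        simp only [walshHadamard, autocorrelation, mul_sum]

lemma sum_signPairing (w : ι → ZMod 2) :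
    ∑ v, (signPairing w v : R) = if w = 0 then 2 ^ Fintype.card ι else 0 := by
  have factor : ∑ v, (signPairing w v : R) = ∏ i, (1 + (-1) ^ (w i).val) := by
    simp only [signPairing]
    rw [← Fintype.prod_sum fun i (j : ZMod 2) => (-1 : R) ^ ((w i).val * j.val)]
    refine prod_congr rfl fun i _ => ?_
    rw [show (univ : Finset (ZMod 2)) = {0, 1} by decide, sum_pair zero_ne_one]
    simp [ZMod.val_one]
  split_ifs with hw
  · simp [hw, signPairing_zero_left]
  · obtain ⟨i, hi⟩ : ∃ i, w i ≠ 0 := Function.ne_iff.mp hw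
    rw [factor]
    refine prod_eq_zero (mem_univ i) ?_
    have hwi : w i = 1 := Fin.eq_one_of_ne_zero _ hi
    simp [hwi, ZMod.val_one]

lemma autocorrelation_walshHadamard (f : (ι → ZMod 2) → R) (u : ι → ZMod 2) :
    autocorrelation (walshHadamard f) u =
      2 ^ Fintype.card ι * walshHadamard (fun v => f v ^ 2) u := by
  have expand (v : ι → ZMod 2) : walshHadamard f (u + v) * walshHadamard f v =
      ∑ s, ∑ t, signPairing u s * f s * f t * signPairing v (s + t) := by
    simp only [walshHadamard, sum_mul_sum, signPairing_add_left, signPairing_add_right]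
    exact sum_congr rfl fun s _ => sum_congr rfl fun t _ => by ring
  have orthogonality (s t : ι → ZMod 2) :
      ∑ v, (signPairing v (s + t) : R) = if s = t then 2 ^ Fintype.card ι else 0 := by
    simp only [signPairing_comm _ (s + t), sum_signPairing, add_eq_zero_iff_eq_neg,
      ZModModule.neg_eq_self]
  calc autocorrelation (walshHadamard f) u
      = ∑ s, ∑ t, signPairing u s * f s * f t * ∑ v, signPairing v (s + t) := by
        simp only [autocorrelation, expand, mul_sum]
        rw [sum_comm]
        exact sum_congr rfl fun s _ => sum_comm
    _ = ∑ s, signPairing u s * f s * f s * 2 ^ Fintype.card ι := by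
        simp only [orthogonality, mul_ite, mul_zero, sum_ite_eq, mem_univ, if_true]
    _ = 2 ^ Fintype.card ι * walshHadamard (fun v => f v ^ 2) u := by
        rw [walshHadamard, mul_sum]
        exact sum_congr rfl fun s _ => by ring

end WalshHadamard

theorem theta_to_agm_general (R : Type*) [CommRing R] (g : ℕ)
    (a b : (Fin g → ZMod 2) → R)
    (htheta : ∀ u : Fin g → ZMod 2,
      (a u) ^ 2 = ∑ v : Fin g → ZMod 2, b (u + v) * b v)
    (y z : (Fin g → ZMod 2) → R)
    (hy : ∀ u : Fin g → ZMod 2,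
      y u = ∑ v : Fin g → ZMod 2, (∏ i : Fin g, (-1 : R) ^ ((u i).val * (v i).val)) * a v)
    (hz : ∀ u : Fin g → ZMod 2,
      z u = ∑ v : Fin g → ZMod 2, (∏ i : Fin g, (-1 : R) ^ ((u i).val * (v i).val)) * b v) :
    ∀ u : Fin g → ZMod 2,
      2 ^ g * (z u) ^ 2 = ∑ v : Fin g → ZMod 2, y (u + v) * y v := by
  obtain rfl : y = walshHadamard a := funext hy
  obtain rfl : z = walshHadamard b := funext hz
  have theta : (fun v => a v ^ 2) = autocorrelation b := funext htheta
  intro u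
  have agm := autocorrelation_walshHadamard a u
  rw [Fintype.card_fin, theta] at agm
  rw [walshHadamard_sq, ← agm]
  rfl

/-- The Hadamard-type transform carries the theta relation
`a(u)² = ∑_v b(u+v) b(v)` into the AGM relation `2^g z(u)² = ∑_v y(u+v) y(v)`,
where `y(u) = ∑_v l_u(v) a(v)`, `z(u) = ∑_v l_u(v) b(v)` and
`l_u(v) = ∏_i (−1)^{u_i v_i}`. -/
theorem theta_to_agm (R : Type*) [CommRing R] (g : ℕ) (hg : 1 ≤ g)
    (h2 : ∀ r : R, 2 * r = 0 → r = 0)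
    (a b : (Fin g → ZMod 2) → R)
    (htheta : ∀ u : Fin g → ZMod 2,
      (a u) ^ 2 = ∑ v : Fin g → ZMod 2, b (u + v) * b v)
    (y z : (Fin g → ZMod 2) → R)
    (hy : ∀ u : Fin g → ZMod 2,
      y u = ∑ v : Fin g → ZMod 2, (∏ i : Fin g, (-1 : R) ^ ((u i).val * (v i).val)) * a v)
    (hz : ∀ u : Fin g → ZMod 2,
      z u = ∑ v : Fin g → ZMod 2, (∏ i : Fin g, (-1 : R) ^ ((u i).val * (v i).val)) * b v) :
    ∀ u : Fin g → ZMod 2,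
      2 ^ g * (z u) ^ 2 = ∑ v : Fin g → ZMod 2, y (u + v) * y v :=
  theta_to_agm_general R g a b htheta y z hy hz
end
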